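/- arXiv:1607.01400 — 7 statements merged into one kernel-verified Lean document; each statement's English description precedes it below -/
import Mathlib

section
/- Suppose β̄ ∈ ℝ^m minimizes the weighted aggregated LAD objective F_C (i.e., F_C(β̄) ≤ F_C(β) for all β ∈ ℝ^m). If for every cluster C_k the residuals y i − Σ_{j<m} x i j * β̄ j, for i ∈ C_k, all have the same sign (all ≥ 0 or all ≤ 0), then β̄ also minimizes the original LAD objective E (E(β̄) ≤ E(β) for all β ∈ ℝ^m), and moreover E(β̄) = F_C(β̄). -/
open Finset

noncomputable section

/-- The cluster of index `k` for the cluster-assignment map `c`. -/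
def cluster {n K : ℕ} (c : Fin n → Fin K) (k : Fin K) : Finset (Fin n) :=
  Finset.univ.filter fun i => c i = k

/-- The original least absolute deviation (LAD) objective. -/
def ladE {n m : ℕ} (x : Fin n → Fin m → ℝ) (y : Fin n → ℝ) (β : Fin m → ℝ) : ℝ :=
  ∑ i, |y i - ∑ j, x i j * β j|

/-- The weighted aggregated LAD objective over the centroids of the clusters. -/
def ladF {n m K : ℕ} (x : Fin n → Fin m → ℝ) (y : Fin n → ℝ)
    (c : Fin n → Fin K) (β : Fin m → ℝ) : ℝ :=
  ∑ k, ((cluster c k).card : ℝ) *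
    |(∑ i ∈ cluster c k, y i) / ((cluster c k).card : ℝ) -
      ∑ j, ((∑ i ∈ cluster c k, x i j) / ((cluster c k).card : ℝ)) * β j|

lemma ladF_eq {n m K : ℕ} (x : Fin n → Fin m → ℝ) (y : Fin n → ℝ)
    (c : Fin n → Fin K) (hsurj : Function.Surjective c) (β : Fin m → ℝ) :
    ladF x y c β = ∑ k, |∑ i ∈ cluster c k, (y i - ∑ j, x i j * β j)| := by
  unfold ladF
  refine Finset.sum_congr rfl fun k _ => ?_
  have hpos : (0 : ℝ) < ((cluster c k).card : ℝ) := by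
    obtain ⟨i, hi⟩ := hsurj k
    have : i ∈ cluster c k := by simp [cluster, hi]
    exact_mod_cast Finset.card_pos.2 ⟨i, this⟩
  have hne : ((cluster c k).card : ℝ) ≠ 0 := ne_of_gt hpos
  have h1 : (∑ i ∈ cluster c k, y i) / ((cluster c k).card : ℝ) -
      ∑ j, ((∑ i ∈ cluster c k, x i j) / ((cluster c k).card : ℝ)) * β j =
      (∑ i ∈ cluster c k, (y i - ∑ j, x i j * β j)) / ((cluster c k).card : ℝ) := by
    rw [Finset.sum_sub_distrib, sub_div, Finset.sum_comm]
    congr 1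
    rw [Finset.sum_div]
    refine Finset.sum_congr rfl fun j _ => ?_
    rw [div_mul_eq_mul_div, Finset.sum_mul]
  rw [h1, abs_div, abs_of_pos hpos, mul_div_cancel₀ _ hne]

lemma ladE_eq {n m K : ℕ} (x : Fin n → Fin m → ℝ) (y : Fin n → ℝ)
    (c : Fin n → Fin K) (β : Fin m → ℝ) :
    ladE x y β = ∑ k, ∑ i ∈ cluster c k, |y i - ∑ j, x i j * β j| := by
  unfold ladE cluster
  rw [← Finset.sum_fiberwise Finset.univ c (fun i => |y i - ∑ j, x i j * β j|)]

/-- If `β̄` minimizes the weighted aggregated LAD objective and, on each cluster,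
the residuals all have the same sign, then `β̄` minimizes the original LAD
objective and the two objective values coincide. -/
theorem lad_aggregated_optimality (n m K : ℕ)
    (x : Fin n → Fin m → ℝ) (y : Fin n → ℝ)
    (c : Fin n → Fin K) (hsurj : Function.Surjective c)
    (βbar : Fin m → ℝ)
    (hmin : ∀ β : Fin m → ℝ, ladF x y c βbar ≤ ladF x y c β)
    (hsign : ∀ k : Fin K,
      (∀ i ∈ cluster c k, 0 ≤ y i - ∑ j, x i j * βbar j) ∨
      (∀ i ∈ cluster c k, y i - ∑ j, x i j * βbar j ≤ 0)) :
    (∀ β : Fin m → ℝ, ladE x y βbar ≤ ladE x y β) ∧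
      ladE x y βbar = ladF x y c βbar := by
  have hFE : ∀ β, ladF x y c β ≤ ladE x y β := by
    intro β
    rw [ladF_eq x y c hsurj β, ladE_eq x y c β]
    exact Finset.sum_le_sum fun k _ => Finset.abs_sum_le_sum_abs _ _
  have heq : ladE x y βbar = ladF x y c βbar := by
    rw [ladF_eq x y c hsurj βbar, ladE_eq x y c βbar]
    refine Finset.sum_congr rfl fun k _ => ?_
    rcases hsign k with h | h
    · rw [abs_of_nonneg (Finset.sum_nonneg h)]
      exact Finset.sum_congr rfl fun i hi => abs_of_nonneg (h i hi)
    · rw [abs_of_nonpos (Finset.sum_nonpos h), ← Finset.sum_neg_distrib]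
      exact Finset.sum_congr rfl fun i hi => abs_of_nonpos (h i hi)
  exact ⟨fun β => heq ▸ ((hmin β).trans (hFE β)), heq⟩

end
end

section
/- For every partition C of Fin n into nonempty clusters and every β ∈ ℝ^m, F_C(β) ≤ E(β). Consequently, any value of the aggregated LAD objective at a minimizer of F_C is a lower bound on the optimal value of the original LAD problem: if β̄ minimizes F_C then F_C(β̄) ≤ E(β) for all β ∈ ℝ^m. -/
open Finset

noncomputable section

/-- For every partition into nonempty clusters and every `β`, the weighted
aggregated LAD objective is a lower bound for the original LAD objective;
consequently, the value at a minimizer of the aggregated objective is a lower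
bound on the optimal value of the original LAD problem. -/
theorem lad_aggregated_lower_bound (n m K : ℕ)
    (x : Fin n → Fin m → ℝ) (y : Fin n → ℝ)
    (c : Fin n → Fin K) (hsurj : Function.Surjective c) :
    (∀ β : Fin m → ℝ, ladF x y c β ≤ ladE x y β) ∧
    (∀ βbar : Fin m → ℝ, (∀ β : Fin m → ℝ, ladF x y c βbar ≤ ladF x y c β) →
      ∀ β : Fin m → ℝ, ladF x y c βbar ≤ ladE x y β) := by
  have main : ∀ β : Fin m → ℝ, ladF x y c β ≤ ladE x y β := by
    intro β
    have hE : ladE x y β = ∑ k, ∑ i ∈ cluster c k, |y i - ∑ j, x i j * β j| := by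
      rw [ladE, ← Finset.sum_fiberwise (g := c)]
      rfl
    rw [ladF, hE]
    apply Finset.sum_le_sum
    intro k _
    have hN : (0 : ℝ) < ((cluster c k).card : ℝ) := by
      obtain ⟨i, hi⟩ := hsurj k
      have : i ∈ cluster c k := by simp [cluster, hi]
      exact_mod_cast Finset.card_pos.mpr ⟨i, this⟩
    have hne : ((cluster c k).card : ℝ) ≠ 0 := ne_of_gt hN
    have key : ((cluster c k).card : ℝ) *
        |(∑ i ∈ cluster c k, y i) / ((cluster c k).card : ℝ) -
          ∑ j, ((∑ i ∈ cluster c k, x i j) / ((cluster c k).card : ℝ)) * β j| =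
        |∑ i ∈ cluster c k, (y i - ∑ j, x i j * β j)| := by
      nth_rewrite 1 [← abs_of_pos hN]
      rw [← abs_mul]
      congr 1
      rw [mul_sub, mul_div_cancel₀ _ hne, Finset.mul_sum, Finset.sum_sub_distrib]
      congr 1
      rw [Finset.sum_comm]
      refine Finset.sum_congr rfl fun j _ => ?_
      rw [← mul_assoc, mul_div_cancel₀ _ hne, Finset.sum_mul]
    rw [key]
    exact Finset.abs_sum_le_sum_abs _ _
  exact ⟨main, fun βbar hmin β => le_trans (hmin β) (main β)⟩

end
end

section
/- For every label-pure partition C of Fin n into nonempty clusters and every pair (w, b), F_C(w, b) ≤ E(w, b). Consequently, if (w̄, b̄) minimizes F_C then F_C(w̄, b̄) ≤ E(w, b) for all (w, b), i.e., the optimal value of the weighted aggregated SVM is a lower bound on the optimal value of the original SVM. -/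
open Finset
open scoped RealInnerProductSpace

noncomputable section

/-- Centroid of the cluster of index `k`. -/
def centroid {n m K : ℕ} (x : Fin n → EuclideanSpace ℝ (Fin m))
    (c : Fin n → Fin K) (k : Fin K) : EuclideanSpace ℝ (Fin m) :=
  ((cluster c k).card : ℝ)⁻¹ • ∑ i ∈ cluster c k, x i

/-- The soft-margin linear SVM objective (hinge-loss form). -/
def svmE {n m : ℕ} (x : Fin n → EuclideanSpace ℝ (Fin m)) (y : Fin n → ℝ)
    (M : ℝ) (w : EuclideanSpace ℝ (Fin m)) (b : ℝ) : ℝ :=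
  (1 / 2) * ‖w‖ ^ 2 + M * ∑ i, max 0 (1 - y i * (⟪w, x i⟫ + b))

/-- The weighted aggregated SVM objective for a label-pure partition with
common labels `yhat`. -/
def svmF {n m K : ℕ} (x : Fin n → EuclideanSpace ℝ (Fin m))
    (c : Fin n → Fin K) (yhat : Fin K → ℝ) (M : ℝ)
    (w : EuclideanSpace ℝ (Fin m)) (b : ℝ) : ℝ :=
  (1 / 2) * ‖w‖ ^ 2 + M * ∑ k, ((cluster c k).card : ℝ) *
    max 0 (1 - yhat k * (⟪w, centroid x c k⟫ + b))

/-- For every label-pure partition into nonempty clusters and every `(w, b)`,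
the weighted aggregated SVM objective is a lower bound for the original SVM
objective; consequently its value at a minimizer is a lower bound on the
optimal value of the original SVM. -/
theorem svm_aggregated_lower_bound (n m K : ℕ)
    (x : Fin n → EuclideanSpace ℝ (Fin m)) (y : Fin n → ℝ)
    (hy : ∀ i, y i = 1 ∨ y i = -1) (M : ℝ) (hM : 0 < M)
    (c : Fin n → Fin K) (hsurj : Function.Surjective c)
    (yhat : Fin K → ℝ) (hpure : ∀ i, yhat (c i) = y i) :
    (∀ (w : EuclideanSpace ℝ (Fin m)) (b : ℝ),
        svmF x c yhat M w b ≤ svmE x y M w b) ∧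
    (∀ (wbar : EuclideanSpace ℝ (Fin m)) (bbar : ℝ),
      (∀ (w : EuclideanSpace ℝ (Fin m)) (b : ℝ),
          svmF x c yhat M wbar bbar ≤ svmF x c yhat M w b) →
      ∀ (w : EuclideanSpace ℝ (Fin m)) (b : ℝ),
        svmF x c yhat M wbar bbar ≤ svmE x y M w b) := by
  have key : ∀ (w : EuclideanSpace ℝ (Fin m)) (b : ℝ),
      svmF x c yhat M w b ≤ svmE x y M w b := by
    intro w b
    have hsum : ∑ k, ((cluster c k).card : ℝ) *
        max 0 (1 - yhat k * (⟪w, centroid x c k⟫ + b))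
        ≤ ∑ i, max 0 (1 - y i * (⟪w, x i⟫ + b)) := by
      rw [← Finset.sum_fiberwise Finset.univ c
        (fun i => max 0 (1 - y i * (⟪w, x i⟫ + b)))]
      apply Finset.sum_le_sum
      intro k _
      set s : Finset (Fin n) := cluster c k with hs
      have hfil : Finset.univ.filter (fun i => c i = k) = s := rfl
      have hNpos : 0 < (s.card : ℝ) := by
        obtain ⟨i, hi⟩ := hsurj k
        have : i ∈ s := by simp [hs, cluster, hi]
        exact_mod_cast Finset.card_pos.mpr ⟨i, this⟩
      have hmem : ∀ i ∈ s, y i = yhat k := by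
        intro i hi
        have hci : c i = k := by simpa [hs, cluster] using hi
        rw [← hpure i, hci]
      have hinner : ⟪w, centroid x c k⟫
          = ((s.card : ℝ))⁻¹ * ∑ i ∈ s, ⟪w, x i⟫ := by
        rw [_root_.centroid, inner_smul_right, inner_sum]
      have ht : (s.card : ℝ) * (1 - yhat k * (⟪w, centroid x c k⟫ + b))
          = ∑ i ∈ s, (1 - y i * (⟪w, x i⟫ + b)) := by
        have h1 : ∑ i ∈ s, (1 - y i * (⟪w, x i⟫ + b))
            = (s.card : ℝ) - yhat k * ((∑ i ∈ s, ⟪w, x i⟫) + (s.card : ℝ) * b) := by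
          rw [Finset.sum_sub_distrib]
          simp only [Finset.sum_const, nsmul_eq_mul, mul_one]
          rw [Finset.sum_congr rfl (fun i hi => by rw [hmem i hi])]
          rw [← Finset.mul_sum, Finset.sum_add_distrib]
          simp only [Finset.sum_const, nsmul_eq_mul]
        rw [h1, hinner]
        have hne : ((s.card : ℝ)) ≠ 0 := hNpos.ne'
        linear_combination (-(yhat k * ∑ i ∈ s, ⟪w, x i⟫)) * mul_inv_cancel₀ hne
      have hmax : (s.card : ℝ) * max 0 (1 - yhat k * (⟪w, centroid x c k⟫ + b))
          = max 0 (∑ i ∈ s, (1 - y i * (⟪w, x i⟫ + b))) := by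
        rw [← ht, mul_max_of_nonneg _ _ hNpos.le, mul_zero]
      rw [hmax]
      apply max_le
      · exact Finset.sum_nonneg fun i _ => le_max_left _ _
      · exact Finset.sum_le_sum fun i _ => le_max_right _ _
    unfold svmF svmE
    have := mul_le_mul_of_nonneg_left hsum hM.le
    linarith
  exact ⟨key, fun wbar bbar hmin w b => le_trans (hmin w b) (key w b)⟩


end
end

section
/- Let S ⊆ Fin n be a nonempty cluster on which y is constant with common label ŷ, and let (w, b) be given. If either 1 − y i * (⟪w, x i⟫ + b) ≤ 0 for all i ∈ S, or 1 − y i * (⟪w, x i⟫ + b) ≥ 0 for all i ∈ S, then Σ_{i∈S} max(0, 1 − y i * (⟪w, x i⟫ + b)) = |S| * max(0, 1 − ŷ * (⟪w, x̄_S⟫ + b)), where x̄_S = (Σ_{i∈S} x i)/|S| is the centroid of S. -/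
open Finset
open scoped RealInnerProductSpace

noncomputable section

/-- If on a nonempty cluster `S`, on which the labels are constantly `yhat`,
the quantities `1 - y i * (⟪w, x i⟫ + b)` all have the same sign, then the sum
of the hinge losses over `S` equals `|S|` times the hinge loss of the centroid
of `S`. -/
theorem svm_cluster_same_side (n m : ℕ)
    (x : Fin n → EuclideanSpace ℝ (Fin m)) (y : Fin n → ℝ)
    (hy : ∀ i, y i = 1 ∨ y i = -1)
    (S : Finset (Fin n)) (hS : S.Nonempty)
    (yhat : ℝ) (hpure : ∀ i ∈ S, y i = yhat)
    (w : EuclideanSpace ℝ (Fin m)) (b : ℝ)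
    (hside : (∀ i ∈ S, 1 - y i * (⟪w, x i⟫ + b) ≤ 0) ∨
             (∀ i ∈ S, 0 ≤ 1 - y i * (⟪w, x i⟫ + b))) :
    ∑ i ∈ S, max 0 (1 - y i * (⟪w, x i⟫ + b)) =
      (S.card : ℝ) *
        max 0 (1 - yhat * (⟪w, (S.card : ℝ)⁻¹ • ∑ i ∈ S, x i⟫ + b)) := by
  have hcard : (0 : ℝ) < (S.card : ℝ) := by
    exact_mod_cast Finset.card_pos.mpr hS
  have hinner : ⟪w, (S.card : ℝ)⁻¹ • ∑ i ∈ S, x i⟫ =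
      (S.card : ℝ)⁻¹ * ∑ i ∈ S, ⟪w, x i⟫ := by
    rw [real_inner_smul_right, inner_sum]
  have hkey : 1 - yhat * (⟪w, (S.card : ℝ)⁻¹ • ∑ i ∈ S, x i⟫ + b) =
      (S.card : ℝ)⁻¹ * ∑ i ∈ S, (1 - y i * (⟪w, x i⟫ + b)) := by
    have hsum : ∑ i ∈ S, (1 - y i * (⟪w, x i⟫ + b)) =
        (S.card : ℝ) - yhat * ((∑ i ∈ S, ⟪w, x i⟫) + (S.card : ℝ) * b) := by
      rw [Finset.sum_congr rfl (fun i hi => by rw [hpure i hi])]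
      simp only [Finset.sum_sub_distrib, Finset.sum_const, smul_eq_mul, mul_one,
        mul_add, Finset.sum_add_distrib, ← Finset.mul_sum]
      push_cast
      ring
    rw [hinner, hsum]
    have hc : ((S.card : ℝ))⁻¹ * (S.card : ℝ) = 1 := inv_mul_cancel₀ hcard.ne'
    linear_combination (yhat * b - 1) * hc
  rcases hside with h | h
  · have h1 : ∑ i ∈ S, max 0 (1 - y i * (⟪w, x i⟫ + b)) = 0 := by
      apply Finset.sum_eq_zero
      intro i hi
      exact max_eq_left (h i hi)
    have h2 : 1 - yhat * (⟪w, (S.card : ℝ)⁻¹ • ∑ i ∈ S, x i⟫ + b) ≤ 0 := by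
      rw [hkey]
      apply mul_nonpos_of_nonneg_of_nonpos (by positivity)
      exact Finset.sum_nonpos h
    rw [h1, max_eq_left h2, mul_zero]
  · have h1 : ∑ i ∈ S, max 0 (1 - y i * (⟪w, x i⟫ + b)) =
        ∑ i ∈ S, (1 - y i * (⟪w, x i⟫ + b)) :=
      Finset.sum_congr rfl fun i hi => max_eq_right (h i hi)
    have h2 : 0 ≤ 1 - yhat * (⟪w, (S.card : ℝ)⁻¹ • ∑ i ∈ S, x i⟫ + b) := by
      rw [hkey]
      exact mul_nonneg (by positivity) (Finset.sum_nonneg h)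
    rw [h1, max_eq_right h2, hkey, ← mul_assoc, mul_inv_cancel₀ hcard.ne', one_mul]

end
end

section
/- Let C and C' be label-pure partitions of Fin n into nonempty clusters such that C' refines C (every cluster of C' is contained in some cluster of C). If (w̄, b̄) minimizes F_C and (w̄', b̄') minimizes F_{C'}, then F_C(w̄, b̄) ≤ F_{C'}(w̄', b̄'). Moreover F_{C'}(w̄', b̄') ≤ E(w, b) for all (w, b), so the optimal aggregated SVM objective values are nondecreasing under declustering and never exceed the original SVM optimal value. -/
open Finset
open scoped RealInnerProductSpace

noncomputable section

/-! For fixed `(w, b)` the slack `1 - y (⟪w, x⟫ + b)` is affine in `x`, and the label is constant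
on each cluster, so the weighted centroid term of a cluster is the hinge of the sum of its points'
slacks. Since the hinge of a sum is at most the sum of the hinges, refining a partition can only
increase `F` at every `(w, b)`, and `E` is `F` for the partition into singletons. Comparing minima
gives both inequalities. -/

section Refinement

variable {ι κ κ' : Type*}

lemma sum_mul_le_max_zero_sum {s : Finset ι} {a ℓ : ι → ℝ}
    (hconst : ∀ i ∈ s, ∀ j ∈ s, a i = a j) (ha : ∀ i ∈ s, a i ∈ Set.Icc 0 1) :
    ∑ i ∈ s, a i * ℓ i ≤ max 0 (∑ i ∈ s, ℓ i) := by
  rcases s.eq_empty_or_nonempty with rfl | ⟨i₀, hi₀⟩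
  · simp
  rw [sum_congr rfl fun i hi => by rw [hconst i hi i₀ hi₀], ← mul_sum]
  obtain ⟨h0, h1⟩ := ha i₀ hi₀
  rcases le_total 0 (∑ i ∈ s, ℓ i) with h | h
  · exact (mul_le_of_le_one_left h h1).trans (le_max_right _ _)
  · exact (mul_nonpos_of_nonneg_of_nonpos h0 h).trans (le_max_left _ _)

/-- Writing `max 0 s = a * s` with `a ∈ {0, 1}` chosen per coarse cluster, the coarse side becomes
a linear combination of the `ℓ i` whose coefficients are constant on the fine clusters. -/
lemma sum_max_zero_fiber_le_of_refines [Fintype ι] [Fintype κ] [Fintype κ'] [DecidableEq κ]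
    [DecidableEq κ'] (ℓ : ι → ℝ) (c : ι → κ) (c' : ι → κ')
    (hrefine : ∀ i j, c' i = c' j → c i = c j) :
    ∑ k, max 0 (∑ i with c i = k, ℓ i) ≤ ∑ k', max 0 (∑ i with c' i = k', ℓ i) := by
  set a : κ → ℝ := fun k => if 0 ≤ ∑ i with c i = k, ℓ i then 1 else 0
  have hmax : ∀ k, max 0 (∑ i with c i = k, ℓ i) = a k * ∑ i with c i = k, ℓ i := fun k => by
    by_cases h : 0 ≤ ∑ i with c i = k, ℓ i
    · simp [a, h]
    · simp [a, h, (not_le.1 h).le]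
  have ha : ∀ k, a k ∈ Set.Icc 0 1 := fun k => by
    by_cases h : 0 ≤ ∑ i with c i = k, ℓ i <;> simp [a, h]
  calc ∑ k, max 0 (∑ i with c i = k, ℓ i)
      = ∑ k, ∑ i with c i = k, a (c i) * ℓ i := by
        refine sum_congr rfl fun k _ => ?_
        rw [hmax, mul_sum]
        exact sum_congr rfl fun i hi => by rw [(mem_filter.1 hi).2]
    _ = ∑ k', ∑ i with c' i = k', a (c i) * ℓ i := by rw [sum_fiberwise, sum_fiberwise]
    _ ≤ ∑ k', max 0 (∑ i with c' i = k', ℓ i) := by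
      refine sum_le_sum fun k' _ => sum_mul_le_max_zero_sum (fun i hi j hj => ?_) fun i _ => ha _
      rw [hrefine i j ((mem_filter.1 hi).2.trans (mem_filter.1 hj).2.symm)]

end Refinement

section Aggregation

variable {n m K K' : ℕ} {x : Fin n → EuclideanSpace ℝ (Fin m)} {y : Fin n → ℝ} {M : ℝ}

lemma card_smul_centroid (c : Fin n → Fin K) (k : Fin K) :
    ((cluster c k).card : ℝ) • _root_.centroid x c k = ∑ i ∈ cluster c k, x i := by
  rcases (cluster c k).eq_empty_or_nonempty with h | h
  · simp [h]
  · exact smul_inv_smul₀ (Nat.cast_ne_zero.2 h.card_pos.ne') _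

lemma card_mul_max_zero_centroid {c : Fin n → Fin K} {yhat : Fin K → ℝ}
    (hpure : ∀ i, yhat (c i) = y i) (w : EuclideanSpace ℝ (Fin m)) (b : ℝ) (k : Fin K) :
    ((cluster c k).card : ℝ) * max 0 (1 - yhat k * (⟪w, _root_.centroid x c k⟫ + b)) =
      max 0 (∑ i ∈ cluster c k, (1 - y i * (⟪w, x i⟫ + b))) := by
  have hlabel : ∀ i ∈ cluster c k, y i = yhat k := fun i hi => by
    rw [← hpure i, (mem_filter.1 hi).2]
  rw [mul_max_of_nonneg _ _ (Nat.cast_nonneg _), mul_zero, sum_congr rfl fun i hi => by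
    rw [hlabel i hi]]
  congr 1
  have hinner := congrArg (⟪w, ·⟫) (card_smul_centroid (x := x) c k)
  simp only [real_inner_smul_right, inner_sum] at hinner
  simp only [sum_sub_distrib, ← mul_sum, sum_add_distrib, sum_const, nsmul_eq_mul, mul_one,
    ← hinner]
  ring

lemma svmF_eq_sum_max_zero {c : Fin n → Fin K} {yhat : Fin K → ℝ} (hpure : ∀ i, yhat (c i) = y i)
    (w : EuclideanSpace ℝ (Fin m)) (b : ℝ) :
    svmF x c yhat M w b = (1 / 2) * ‖w‖ ^ 2 +
      M * ∑ k, max 0 (∑ i ∈ cluster c k, (1 - y i * (⟪w, x i⟫ + b))) := by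
  simp only [svmF, card_mul_max_zero_centroid hpure]

lemma svmF_le_svmF_of_refines (hM : 0 ≤ M) {c : Fin n → Fin K} {yhat : Fin K → ℝ}
    (hpure : ∀ i, yhat (c i) = y i) {c' : Fin n → Fin K'} {yhat' : Fin K' → ℝ}
    (hpure' : ∀ i, yhat' (c' i) = y i) (hrefine : ∀ i j, c' i = c' j → c i = c j)
    (w : EuclideanSpace ℝ (Fin m)) (b : ℝ) :
    svmF x c yhat M w b ≤ svmF x c' yhat' M w b := by
  rw [svmF_eq_sum_max_zero hpure, svmF_eq_sum_max_zero hpure']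
  gcongr
  exact sum_max_zero_fiber_le_of_refines _ c c' hrefine

lemma svmF_id (w : EuclideanSpace ℝ (Fin m)) (b : ℝ) : svmF x id y M w b = svmE x y M w b := by
  simp [svmF_eq_sum_max_zero (fun _ => rfl), svmE, cluster, filter_eq']

end Aggregation

theorem svm_refinement_monotone_general (n m K K' : ℕ)
    (x : Fin n → EuclideanSpace ℝ (Fin m)) (y : Fin n → ℝ)
    (M : ℝ) (hM : 0 < M)
    (c : Fin n → Fin K)
    (yhat : Fin K → ℝ) (hpure : ∀ i, yhat (c i) = y i)
    (c' : Fin n → Fin K')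
    (yhat' : Fin K' → ℝ) (hpure' : ∀ i, yhat' (c' i) = y i)
    (hrefine : ∀ i j : Fin n, c' i = c' j → c i = c j)
    (wbar : EuclideanSpace ℝ (Fin m)) (bbar : ℝ)
    (wbar' : EuclideanSpace ℝ (Fin m)) (bbar' : ℝ)
    (hmin : ∀ (w : EuclideanSpace ℝ (Fin m)) (b : ℝ),
      svmF x c yhat M wbar bbar ≤ svmF x c yhat M w b)
    (hmin' : ∀ (w : EuclideanSpace ℝ (Fin m)) (b : ℝ),
      svmF x c' yhat' M wbar' bbar' ≤ svmF x c' yhat' M w b) :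
    svmF x c yhat M wbar bbar ≤ svmF x c' yhat' M wbar' bbar' ∧
      ∀ (w : EuclideanSpace ℝ (Fin m)) (b : ℝ),
        svmF x c' yhat' M wbar' bbar' ≤ svmE x y M w b := by
  refine ⟨(hmin wbar' bbar').trans (svmF_le_svmF_of_refines hM.le hpure hpure' hrefine _ _),
    fun w b => ?_⟩
  calc svmF x c' yhat' M wbar' bbar' ≤ svmF x c' yhat' M w b := hmin' w b
    _ ≤ svmF x id y M w b :=
      svmF_le_svmF_of_refines hM.le hpure' (fun _ => rfl) (fun _ _ h => congrArg c' h) w b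
    _ = svmE x y M w b := svmF_id w b

/-- If the label-pure partition given by `c'` refines the label-pure partition
given by `c`, and `(w̄, b̄)`, `(w̄', b̄')` minimize the respective aggregated SVM
objectives, then the optimal aggregated values are nondecreasing under this
refinement and never exceed the original SVM objective. -/
theorem svm_refinement_monotone (n m K K' : ℕ)
    (x : Fin n → EuclideanSpace ℝ (Fin m)) (y : Fin n → ℝ)
    (hy : ∀ i, y i = 1 ∨ y i = -1) (M : ℝ) (hM : 0 < M)
    (c : Fin n → Fin K) (hsurj : Function.Surjective c)
    (yhat : Fin K → ℝ) (hpure : ∀ i, yhat (c i) = y i)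
    (c' : Fin n → Fin K') (hsurj' : Function.Surjective c')
    (yhat' : Fin K' → ℝ) (hpure' : ∀ i, yhat' (c' i) = y i)
    (hrefine : ∀ i j : Fin n, c' i = c' j → c i = c j)
    (wbar : EuclideanSpace ℝ (Fin m)) (bbar : ℝ)
    (wbar' : EuclideanSpace ℝ (Fin m)) (bbar' : ℝ)
    (hmin : ∀ (w : EuclideanSpace ℝ (Fin m)) (b : ℝ),
      svmF x c yhat M wbar bbar ≤ svmF x c yhat M w b)
    (hmin' : ∀ (w : EuclideanSpace ℝ (Fin m)) (b : ℝ),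
      svmF x c' yhat' M wbar' bbar' ≤ svmF x c' yhat' M w b) :
    svmF x c yhat M wbar bbar ≤ svmF x c' yhat' M wbar' bbar' ∧
      ∀ (w : EuclideanSpace ℝ (Fin m)) (b : ℝ),
        svmF x c' yhat' M wbar' bbar' ≤ svmE x y M w b :=
  svm_refinement_monotone_general n m K K' x y M hM c yhat hpure c' yhat' hpure' hrefine wbar bbar
    wbar' bbar' hmin hmin'

end
end

section
/- Let C be a label-pure partition of Fin n into nonempty clusters, and let (w, b, ξ) with ξ : Fin n → ℝ satisfy y i * (⟪w, x i⟫ + b) ≥ 1 − ξ i and ξ i ≥ 0 for all i (feasibility for the original SVM). Define ξ̂_k = (Σ_{i∈C_k} ξ i)/|C_k| for each cluster. Then (w, b, ξ̂) is feasible for the aggregated SVM: ŷ_k * (⟪w, x̄_k⟫ + b) ≥ 1 − ξ̂_k and ξ̂_k ≥ 0 for every k, and moreover Σ_k |C_k| * ξ̂_k = Σ_{i<n} ξ i, so the weighted aggregated slack cost equals the original slack cost. -/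
open Finset
open scoped RealInnerProductSpace

noncomputable section

/-- A margin constraint `1 - ξ ≤ a * (⟪w, v⟫ + b)` is affine in `(v, ξ)`, so it survives
averaging over a nonempty family. -/
theorem one_sub_average_le_mul_inner_average_add {ι E : Type*} [NormedAddCommGroup E]
    [InnerProductSpace ℝ E] {s : Finset ι} (hs : s.Nonempty) (x : ι → E) (ξ : ι → ℝ)
    (a b : ℝ) (w : E) (h : ∀ i ∈ s, 1 - ξ i ≤ a * (⟪w, x i⟫ + b)) :
    1 - (∑ i ∈ s, ξ i) / #s ≤ a * (⟪w, (#s : ℝ)⁻¹ • ∑ i ∈ s, x i⟫ + b) := by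
  have hN : (0 : ℝ) < #s := by exact_mod_cast hs.card_pos
  have hsum : ∑ i ∈ s, (1 - ξ i) ≤ ∑ i ∈ s, a * (⟪w, x i⟫ + b) := sum_le_sum h
  rw [sum_sub_distrib, ← mul_sum, sum_add_distrib, ← inner_sum, sum_const, sum_const,
    nsmul_eq_mul, nsmul_eq_mul, mul_one] at hsum
  calc 1 - (∑ i ∈ s, ξ i) / #s = (#s - ∑ i ∈ s, ξ i) / #s := by field_simp
    _ ≤ a * (⟪w, ∑ i ∈ s, x i⟫ + #s * b) / #s := div_le_div_of_nonneg_right hsum hN.le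
    _ = a * (⟪w, (#s : ℝ)⁻¹ • ∑ i ∈ s, x i⟫ + b) := by
      rw [real_inner_smul_right]; field_simp

section Clusters

variable {n K : ℕ} (c : Fin n → Fin K)

@[simp]
theorem mem_cluster {i : Fin n} {k : Fin K} : i ∈ cluster c k ↔ c i = k := by
  simp [cluster]

theorem cluster_nonempty {c : Fin n → Fin K} (hc : Function.Surjective c) (k : Fin K) :
    (cluster c k).Nonempty :=
  (hc k).imp fun _ hi => (mem_cluster c).2 hi

theorem sum_sum_cluster {M : Type*} [AddCommMonoid M] (f : Fin n → M) :
    ∑ k, ∑ i ∈ cluster c k, f i = ∑ i, f i :=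
  sum_fiberwise univ c f

end Clusters

theorem svm_slack_aggregation_general (n m K : ℕ)
    (x : Fin n → EuclideanSpace ℝ (Fin m)) (y : Fin n → ℝ)
    (c : Fin n → Fin K) (hsurj : Function.Surjective c)
    (yhat : Fin K → ℝ) (hpure : ∀ i, yhat (c i) = y i)
    (w : EuclideanSpace ℝ (Fin m)) (b : ℝ) (ξ : Fin n → ℝ)
    (hfeas : ∀ i, 1 - ξ i ≤ y i * (⟪w, x i⟫ + b) ∧ 0 ≤ ξ i)
    (ξhat : Fin K → ℝ)
    (hξhat : ∀ k, ξhat k = (∑ i ∈ cluster c k, ξ i) / ((cluster c k).card : ℝ)) :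
    (∀ k, 1 - ξhat k ≤ yhat k * (⟪w, centroid x c k⟫ + b) ∧ 0 ≤ ξhat k) ∧
      ∑ k, ((cluster c k).card : ℝ) * ξhat k = ∑ i, ξ i := by
  have hfeas_cluster : ∀ k, ∀ i ∈ cluster c k, 1 - ξ i ≤ yhat k * (⟪w, x i⟫ + b) := by
    intro k i hi
    rw [← (mem_cluster c).1 hi, hpure]
    exact (hfeas i).1
  refine ⟨fun k => ⟨?_, ?_⟩, ?_⟩
  · rw [hξhat]
    exact one_sub_average_le_mul_inner_average_add (cluster_nonempty hsurj k) x ξ _ b w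
      (hfeas_cluster k)
  · rw [hξhat]
    exact div_nonneg (sum_nonneg fun i _ => (hfeas i).2) (Nat.cast_nonneg _)
  · have hcard : ∀ k, ((cluster c k).card : ℝ) ≠ 0 := fun k =>
      Nat.cast_ne_zero.2 (cluster_nonempty hsurj k).card_pos.ne'
    simp_rw [hξhat, mul_div_cancel₀ _ (hcard _)]
    exact sum_sum_cluster c ξ

/-- Averaging the slacks of a feasible solution of the original SVM over each
cluster of a label-pure partition yields a feasible solution of the aggregated
SVM with the same total (weighted) slack cost. -/
theorem svm_slack_aggregation (n m K : ℕ)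
    (x : Fin n → EuclideanSpace ℝ (Fin m)) (y : Fin n → ℝ)
    (hy : ∀ i, y i = 1 ∨ y i = -1)
    (c : Fin n → Fin K) (hsurj : Function.Surjective c)
    (yhat : Fin K → ℝ) (hpure : ∀ i, yhat (c i) = y i)
    (w : EuclideanSpace ℝ (Fin m)) (b : ℝ) (ξ : Fin n → ℝ)
    (hfeas : ∀ i, 1 - ξ i ≤ y i * (⟪w, x i⟫ + b) ∧ 0 ≤ ξ i)
    (ξhat : Fin K → ℝ)
    (hξhat : ∀ k, ξhat k = (∑ i ∈ cluster c k, ξ i) / ((cluster c k).card : ℝ)) :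
    (∀ k, 1 - ξhat k ≤ yhat k * (⟪w, centroid x c k⟫ + b) ∧ 0 ≤ ξhat k) ∧
      ∑ k, ((cluster c k).card : ℝ) * ξhat k = ∑ i, ξ i :=
  svm_slack_aggregation_general n m K x y c hsurj yhat hpure w b ξ hfeas ξhat hξhat

end
end

section
/- Let C = {C_1, …, C_K} be a label-pure partition of Fin n into nonempty clusters with common labels ŷ_k, and let ᾱ ∈ ℝ^K satisfy Σ_k ᾱ_k * ŷ_k = 0 and 0 ≤ ᾱ_k ≤ |C_k| * M for all k (feasibility for the aggregated SVM dual). Define α̂ i = ᾱ_k / |C_k| for i ∈ C_k. Then Σ_{i<n} α̂ i * y i = 0 and 0 ≤ α̂ i ≤ M for every i, i.e., α̂ is feasible for the original SVM dual. -/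
open Finset

noncomputable section

/-- Distributing a feasible solution of the aggregated SVM dual uniformly over
the members of each cluster yields a feasible solution of the original SVM
dual. -/
theorem svm_dual_disaggregation_feasible (n m K : ℕ)
    (x : Fin n → EuclideanSpace ℝ (Fin m)) (y : Fin n → ℝ)
    (hy : ∀ i, y i = 1 ∨ y i = -1) (M : ℝ) (hM : 0 < M)
    (c : Fin n → Fin K) (hsurj : Function.Surjective c)
    (yhat : Fin K → ℝ) (hpure : ∀ i, yhat (c i) = y i)
    (αbar : Fin K → ℝ)
    (hsum : ∑ k, αbar k * yhat k = 0)
    (hbnd : ∀ k, 0 ≤ αbar k ∧ αbar k ≤ ((cluster c k).card : ℝ) * M)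
    (αhat : Fin n → ℝ)
    (hαhat : ∀ i, αhat i = αbar (c i) / ((cluster c (c i)).card : ℝ)) :
    ∑ i, αhat i * y i = 0 ∧ ∀ i, 0 ≤ αhat i ∧ αhat i ≤ M := by
  have hcard : ∀ k, 0 < ((cluster c k).card : ℝ) := by
    intro k
    obtain ⟨i, hi⟩ := hsurj k
    have : i ∈ cluster c k := by simp [cluster, hi]
    exact_mod_cast Finset.card_pos.mpr ⟨i, this⟩
  constructor
  · have : ∑ i, αhat i * y i = ∑ k, ∑ i ∈ cluster c k, αhat i * y i := by
      rw [← Finset.sum_fiberwise (g := c)]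
      rfl
    rw [this, ← hsum]
    refine Finset.sum_congr rfl fun k _ => ?_
    have : ∀ i ∈ cluster c k, αhat i * y i = αbar k / ((cluster c k).card : ℝ) * yhat k := by
      intro i hi
      have hci : c i = k := by simpa [cluster] using hi
      rw [hαhat, ← hpure i, hci]
    rw [Finset.sum_congr rfl this, Finset.sum_const, nsmul_eq_mul,
      div_mul_eq_mul_div, mul_div_cancel₀ _ (hcard k).ne']
  · intro i
    obtain ⟨h0, h1⟩ := hbnd (c i)
    have hc := hcard (c i)
    constructor
    · rw [hαhat]; positivity
    · rw [hαhat, div_le_iff₀ hc]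
      linarith [h1, mul_comm M ((cluster c (c i)).card : ℝ)]

end
end
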